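/- Suppose θ : Fin n₁ → ℝ satisfies, for every i < n₁, θ i = |C_i| − Σ_{j ∈ C_i, j < n₁} (1 + θ j)⁻¹ (such θ exists and is unique because every child has a strictly larger index than its parent). Then θ i > 0 for all i, and the Generation Matrix G' of the 1-order subtree T⁽¹⁾ with node weights w' i = √(1 + θ i) and edge weights u' i = 1/√(1 + θ i) for i ≠ 0 satisfies G'ᵀ · G' = M_Tᵀ · M_T. -/

import Mathlib

open Matrix Finset

/-! Both `G'ᵀ G'` and `M_Tᵀ M_T` are Gram matrices of matrices of the shape
`G a b = w a [a = b] - u a [a is a child of b]`. Since a node has only one parent, such a Gram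
matrix has diagonal entries `w j ^ 2 + ∑_{a child of j} u a ^ 2` and off-diagonal entries
`-(w j u j [j child of k] + w k u k [k child of j])`. For `M_T` (all weights `1`, columns restricted
to the non-leaf nodes) and for `G'` (where `w u = 1`) the off-diagonal entries therefore agree, and
the diagonal entries agree precisely because of the recurrence for `θ`. Positivity of `θ` follows
by downward induction on the index: every `(1 + θ j)⁻¹` is then `< 1`, and a non-leaf node has
at least one child. -/

section GenerationMatrix

variable {ι α : Type*} [Fintype ι] [DecidableEq ι] [CommRing α]
  (R : ι → ι → Prop) [DecidableRel R] (w u : ι → α)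

def generationMatrix : Matrix ι ι α :=
  Matrix.of fun a b => if a = b then w a else if R a b then -u a else 0

variable {R}

theorem generationMatrix_transpose_mul_apply_self (hirr : ∀ a, ¬R a a) (j : ι) :
    ((generationMatrix R w u)ᵀ * generationMatrix R w u) j j =
      w j ^ 2 + ∑ a with R a j, u a ^ 2 := by
  have hterm : ∀ a, generationMatrix R w u a j * generationMatrix R w u a j =
      (if a = j then w j ^ 2 else 0) + if R a j then u a ^ 2 else 0 := by
    intro a
    by_cases haj : a = j
    · subst haj; simp [generationMatrix, hirr, sq]
    · by_cases hR : R a j <;> simp [generationMatrix, haj, hR, sq]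
  simp only [mul_apply, transpose_apply, hterm, sum_add_distrib, sum_ite_eq', mem_univ,
    if_true, sum_filter]

theorem generationMatrix_transpose_mul_apply_of_ne
    (hfun : ∀ a b b', R a b → R a b' → b = b') {j k : ι} (hjk : j ≠ k) :
    ((generationMatrix R w u)ᵀ * generationMatrix R w u) j k =
      -((if R j k then w j * u j else 0) + if R k j then w k * u k else 0) := by
  rw [mul_apply, Fintype.sum_eq_add j k hjk]
  · by_cases hjk' : R j k <;> by_cases hkj : R k j <;>
      simp [generationMatrix, hjk, hjk.symm, hjk', hkj, mul_comm, add_comm]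
  · rintro a ⟨haj, hak⟩
    by_cases hRj : R a j
    · have hRk : ¬R a k := fun hRk => hjk (hfun a j k hRj hRk)
      simp [generationMatrix, haj, hak, hRk]
    · simp [generationMatrix, haj, hRj]

end GenerationMatrix

theorem pos_of_eq_sub_sum_inv_one_add {ι : Type*} [Preorder ι] [WellFoundedGT ι]
    (θ : ι → ℝ) (d : ι → ℕ) (S : ι → Finset ι) (hS : ∀ i, ∀ j ∈ S i, i < j)
    (hd : ∀ i, 0 < d i) (hcard : ∀ i, #(S i) ≤ d i)
    (hθ : ∀ i, θ i = d i - ∑ j ∈ S i, (1 + θ j)⁻¹) (i : ι) : 0 < θ i := by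
  induction i using WellFoundedGT.induction with
  | _ i ih =>
  rw [hθ i, sub_pos]
  rcases (S i).eq_empty_or_nonempty with hempty | hne
  · simpa [hempty] using hd i
  · calc ∑ j ∈ S i, (1 + θ j)⁻¹ < ∑ _j ∈ S i, 1 :=
          sum_lt_sum_of_nonempty hne fun j hj =>
            inv_lt_one_of_one_lt₀ (by linarith [ih j (hS i j hj)])
      _ = #(S i) := by simp
      _ ≤ d i := by exact_mod_cast hcard i

section Tree

variable {n : ℕ} [NeZero n] {f : Fin n → Fin n}

abbrev IsTreeChild (f : Fin n → Fin n) (i j : Fin n) : Prop :=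
  i ≠ 0 ∧ f i = j

theorem IsTreeChild.lt (hf : ∀ i : Fin n, i ≠ 0 → f i < i) {i j : Fin n}
    (h : IsTreeChild f i j) : j < i :=
  h.2 ▸ hf i h.1

theorem IsTreeChild.unique {i j j' : Fin n} (h : IsTreeChild f i j)
    (h' : IsTreeChild f i j') : j = j' :=
  h.2.symm.trans h'.2

variable {m : ℕ} (hmn : m ≤ n)

theorem consistencyMatrix_eq_submatrix {M : Matrix (Fin n) (Fin m) ℝ}
    (hM : ∀ (i : Fin n) (j : Fin m), M i j =
      if (i : ℕ) = (j : ℕ) then 1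
      else if i ≠ 0 ∧ (j : ℕ) = (f i : ℕ) then -1 else 0) :
    M = (generationMatrix (IsTreeChild f) 1 1).submatrix id (Fin.castLE hmn) := by
  have hchild : ∀ i j, IsTreeChild f i (Fin.castLE hmn j) ↔ i ≠ 0 ∧ (j : ℕ) = f i :=
    fun i j => and_congr_right' (eq_comm.trans Fin.ext_iff)
  ext i j
  simp only [hM, generationMatrix, submatrix_apply, of_apply, id, Pi.one_apply, Fin.ext_iff,
    Fin.val_castLE, hchild]

theorem of_eq_generationMatrix_restrict (w u : Fin m → ℝ) :
    Matrix.of (fun a b : Fin m =>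
      if a = b then w a
      else if (a : ℕ) ≠ 0 ∧ (b : ℕ) = (f (Fin.castLE hmn a) : ℕ) then -u a else 0) =
    generationMatrix (fun a b => IsTreeChild f (Fin.castLE hmn a) (Fin.castLE hmn b)) w u := by
  have hchild : ∀ a b, IsTreeChild f (Fin.castLE hmn a) (Fin.castLE hmn b) ↔
      (a : ℕ) ≠ 0 ∧ (b : ℕ) = f (Fin.castLE hmn a) := fun a b => by
    simp [IsTreeChild, Fin.ext_iff, eq_comm]
  ext a b
  simp only [generationMatrix, of_apply, hchild]

theorem pos_of_eq_card_children_sub (hf : ∀ i : Fin n, i ≠ 0 → f i < i)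
    (hinner : ∀ i : Fin n, (i : ℕ) < m → ∃ j, IsTreeChild f j i) (θ : Fin m → ℝ)
    (hθ : ∀ i, θ i = #{j | IsTreeChild f j (Fin.castLE hmn i)} -
      ∑ j ∈ {j | IsTreeChild f (Fin.castLE hmn j) (Fin.castLE hmn i)}, (1 + θ j)⁻¹)
    (i : Fin m) : 0 < θ i := by
  refine pos_of_eq_sub_sum_inv_one_add θ _ _ (fun i j hj => (mem_filter.1 hj).2.lt hf)
    (fun i => ?_) (fun i => ?_) hθ i
  · obtain ⟨j, hj⟩ := hinner (Fin.castLE hmn i) i.2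
    exact card_pos.2 ⟨j, mem_filter.2 ⟨mem_univ j, hj⟩⟩
  · exact card_le_card_of_injOn _ (fun j hj => by simpa using hj) (Fin.castLE_injective _).injOn

end Tree

theorem consistencyMatrix_theta_weights_general (n n₁ : ℕ) [NeZero n]
    (f : Fin n → Fin n) (hf : ∀ i : Fin n, i ≠ 0 → f i < i)
    (hn₁n : n₁ < n)
    (hleaf : ∀ i : Fin n, (∃ j : Fin n, j ≠ 0 ∧ f j = i) ↔ (i : ℕ) < n₁)
    (M : Matrix (Fin n) (Fin n₁) ℝ)
    (hM : ∀ (i : Fin n) (j : Fin n₁), M i j =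
      if (i : ℕ) = (j : ℕ) then 1
      else if i ≠ 0 ∧ (j : ℕ) = (f i : ℕ) then -1 else 0)
    (θ : Fin n₁ → ℝ)
    (hθ : ∀ i : Fin n₁, θ i =
      ((Finset.univ.filter fun j : Fin n =>
        j ≠ 0 ∧ f j = Fin.castLE hn₁n.le i).card : ℝ) -
      ∑ j : Fin n₁,
        (if Fin.castLE hn₁n.le j ≠ 0 ∧
            f (Fin.castLE hn₁n.le j) = Fin.castLE hn₁n.le i
         then (1 + θ j)⁻¹ else 0)) :
    (∀ i : Fin n₁, 0 < θ i) ∧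
    (Matrix.of (fun a b : Fin n₁ =>
      if a = b then Real.sqrt (1 + θ a)
      else if (a : ℕ) ≠ 0 ∧ (b : ℕ) = (f (Fin.castLE hn₁n.le a) : ℕ)
        then -(1 / Real.sqrt (1 + θ a))
      else 0))ᵀ *
    Matrix.of (fun a b : Fin n₁ =>
      if a = b then Real.sqrt (1 + θ a)
      else if (a : ℕ) ≠ 0 ∧ (b : ℕ) = (f (Fin.castLE hn₁n.le a) : ℕ)
        then -(1 / Real.sqrt (1 + θ a))
      else 0) = Mᵀ * M := by
  set c : Fin n₁ → Fin n := Fin.castLE hn₁n.le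
  have hc : Function.Injective c := Fin.castLE_injective _
  have hirr : ∀ i, ¬IsTreeChild f i i := fun i h => (h.lt hf).false
  have hθ' : ∀ i, θ i = #{j | IsTreeChild f j (c i)} -
      ∑ j ∈ {j | IsTreeChild f (c j) (c i)}, (1 + θ j)⁻¹ :=
    fun i => by rw [hθ i, sum_filter]
  have hpos := pos_of_eq_card_children_sub hn₁n.le hf (fun i => (hleaf i).2) θ hθ'
  have hθ_one : ∀ a, 0 < 1 + θ a := fun a => by linarith [hpos a]
  have hsq : ∀ a, √(1 + θ a) ^ 2 = 1 + θ a := fun a => Real.sq_sqrt (hθ_one a).le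
  have hmul : ∀ a, √(1 + θ a) * (1 / √(1 + θ a)) = 1 :=
    fun a => mul_one_div_cancel (Real.sqrt_pos.2 (hθ_one a)).ne'
  refine ⟨hpos, ?_⟩
  rw [of_eq_generationMatrix_restrict, consistencyMatrix_eq_submatrix hn₁n.le hM,
    transpose_submatrix, ← submatrix_mul _ _ _ _ _ Function.bijective_id]
  ext j k
  rcases eq_or_ne j k with rfl | hjk
  · rw [submatrix_apply, generationMatrix_transpose_mul_apply_self _ _ hirr,
      generationMatrix_transpose_mul_apply_self _ _ (fun a => hirr (c a))]
    simp only [hsq, one_div, inv_pow, Pi.one_apply, one_pow, sum_const, nsmul_eq_mul, mul_one]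
    linarith [hθ' j]
  · rw [submatrix_apply, generationMatrix_transpose_mul_apply_of_ne (R := IsTreeChild f) _ _
        (fun _ _ _ => IsTreeChild.unique) (hc.ne hjk),
      generationMatrix_transpose_mul_apply_of_ne (R := fun a b => IsTreeChild f (c a) (c b)) _ _
        (fun _ _ _ h h' => hc (h.unique h')) hjk]
    simp only [hmul, Pi.one_apply, mul_one]

/-- The explicit weights of the inner-product-equivalent Generation Matrix: if `θ` satisfies
the recurrence `θ i = |C_i| - ∑_{j ∈ C_i, j < n₁} (1 + θ j)⁻¹`, then `θ i > 0` for all `i`,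
and the Generation Matrix of the `1`-order subtree with node weights `√(1 + θ i)` and edge
weights `1/√(1 + θ i)` satisfies `G'ᵀ ⬝ G' = M_Tᵀ ⬝ M_T`. -/
theorem consistencyMatrix_theta_weights (n n₁ : ℕ) [NeZero n]
    (f : Fin n → Fin n) (hf0 : f 0 = 0) (hf : ∀ i : Fin n, i ≠ 0 → f i < i)
    (hn₁ : 1 ≤ n₁) (hn₁n : n₁ < n)
    (hleaf : ∀ i : Fin n, (∃ j : Fin n, j ≠ 0 ∧ f j = i) ↔ (i : ℕ) < n₁)
    (M : Matrix (Fin n) (Fin n₁) ℝ)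
    (hM : ∀ (i : Fin n) (j : Fin n₁), M i j =
      if (i : ℕ) = (j : ℕ) then 1
      else if i ≠ 0 ∧ (j : ℕ) = (f i : ℕ) then -1 else 0)
    (θ : Fin n₁ → ℝ)
    (hθ : ∀ i : Fin n₁, θ i =
      ((Finset.univ.filter fun j : Fin n =>
        j ≠ 0 ∧ f j = Fin.castLE hn₁n.le i).card : ℝ) -
      ∑ j : Fin n₁,
        (if Fin.castLE hn₁n.le j ≠ 0 ∧
            f (Fin.castLE hn₁n.le j) = Fin.castLE hn₁n.le i
         then (1 + θ j)⁻¹ else 0)) :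
    (∀ i : Fin n₁, 0 < θ i) ∧
    (Matrix.of (fun a b : Fin n₁ =>
      if a = b then Real.sqrt (1 + θ a)
      else if (a : ℕ) ≠ 0 ∧ (b : ℕ) = (f (Fin.castLE hn₁n.le a) : ℕ)
        then -(1 / Real.sqrt (1 + θ a))
      else 0))ᵀ *
    Matrix.of (fun a b : Fin n₁ =>
      if a = b then Real.sqrt (1 + θ a)
      else if (a : ℕ) ≠ 0 ∧ (b : ℕ) = (f (Fin.castLE hn₁n.le a) : ℕ)
        then -(1 / Real.sqrt (1 + θ a))
      else 0) = Mᵀ * M :=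
  consistencyMatrix_theta_weights_general n n₁ f hf hn₁n hleaf M hM θ hθ
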